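/- Let m ≥ 2 be an even integer and let d be a power of two with m² < d ≤ 2m². Then for every n ≥ 2m³, there is no deterministic sequential protocol for n parties, all of whose message alphabets M_1,…,M_{n−1} have size at most m, that solves the sequential n-point modulo-(m,d) problem with certainty. (Equivalently: any classical simulation of the temporal GHZ correlations of a single m-level system for n ≥ 2m³ measurements must at some stage communicate strictly more than log₂ m bits, exceeding the Holevo bound of the system.) -/

import Mathlib

/-- A deterministic sequential protocol for `n` parties in the sequential `n`-point
modulo-`(m,d)` problem.  Stage `k+1` (1-indexed) receives a message from alphabet `Msg k`
(`Msg 0` being a one-element set), together with its input in `Fin d`, produces an output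
in `Fin m` and sends a message from alphabet `Msg (k+1)` to the following party. -/
structure SeqProtocol (n m d : ℕ) where
  Msg : ℕ → Type
  msgFintype : ∀ k, Fintype (Msg k)
  msgInit : Msg 0
  msgInitSubsingleton : Subsingleton (Msg 0)
  out : (k : ℕ) → Fin d → Msg k → Fin m
  send : (k : ℕ) → Fin d → Msg k → Msg (k + 1)

namespace SeqProtocol

variable {n m d : ℕ}

/-- The message produced after the first `k` stages on input `X` (where `X k` is the
input of the `(k+1)`-st party, 0-indexed). -/
def run (P : SeqProtocol n m d) (X : ℕ → Fin d) : (k : ℕ) → P.Msg k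
  | 0 => P.msgInit
  | k + 1 => P.send k (X k) (P.run X k)

/-- The protocol solves the sequential `n`-point modulo-`(m,d)` problem with certainty:
for every input `X` with `∑ X k ≡ 0 (mod d)`, the outputs `Y` satisfy
`d * ∑ Y k ≡ ∑ X k (mod m·d)`. -/
def Solves (P : SeqProtocol n m d) : Prop :=
  ∀ X : ℕ → Fin d,
    (d : ℤ) ∣ (∑ k ∈ Finset.range n, ((X k : ℕ) : ℤ)) →
    ((d : ℤ) * ∑ k ∈ Finset.range n, ((P.out k (X k) (P.run X k) : ℕ) : ℤ)) ≡
      (∑ k ∈ Finset.range n, ((X k : ℕ) : ℤ)) [ZMOD ((m : ℤ) * d)]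

end SeqProtocol

/-!
Call `r : ZMod d` reachable at stage `k` with message `μ` if some input prefix of length `k`
produces `μ` and has input sum `r`. If two prefixes produce the same message and have the same
input sum mod `d`, correctness forces their values of `∑ X - d ∑ Y` to agree mod `m d`: complete
both by the same suffix. With fewer than `d` messages, at every stage two inputs `x ≠ x'` are sent
to the same message, so the reachable set either grows or is invariant under translation by
`ε = x - x'`; it cannot grow `d` times, so such an invariant stage exists. There, translating the
input sum by `ε` changes `∑ X - d ∑ Y` by a fixed `Δ : ZMod (m d)` reducing to `ε` mod `d`, and
going once around the orbit of `ε` gives `addOrderOf ε • Δ = 0`. As `d` is a power of two the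
order of `ε ≠ 0` is even, and as `m` is even every element of order two in `ZMod (m d)` lies in
`d • ZMod (m d)`; so already `(addOrderOf ε / 2) • ε = 0`, which is absurd.
-/

open Finset

theorem Finset.card_lt_card_image_add_union_or_add_sub_mem {G : Type*} [AddCommGroup G]
    [DecidableEq G] (R : Finset G) (a b : G) :
    #R < #(R.image (· + a) ∪ R.image (· + b)) ∨ ∀ r ∈ R, r + (a - b) ∈ R := by
  by_cases h : R.image (· + a) ⊆ R.image (· + b)
  · right
    intro r hr
    obtain ⟨r', hr', hr'r⟩ := mem_image.mp (h (mem_image_of_mem (· + a) hr))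
    convert hr' using 1
    rw [← add_sub_assoc, ← hr'r, add_sub_cancel_right]
  · left
    calc #R = #(R.image (· + b)) := (card_image_of_injective _ (add_left_injective b)).symm
      _ < _ := card_lt_card (ssubset_of_subset_of_ne subset_union_right
          (fun heq => h (heq ▸ subset_union_left)))

theorem AddMonoidHom.nsmul_addOrderOf_map_ne_zero {G H : Type*} [AddGroup G] [AddGroup H]
    [Finite H] (f : G →+ H) (hf : ∀ z, 2 • z = 0 → f z = 0) {y : G}
    (hy : 2 ∣ addOrderOf (f y)) : addOrderOf (f y) • y ≠ 0 := by
  obtain ⟨l, hl⟩ := hy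
  intro h
  have hl0 : l • f y = 0 := by
    rw [← map_nsmul]
    exact hf _ (by rwa [smul_smul, ← hl])
  have := Nat.le_of_dvd (Nat.pos_of_ne_zero ?_) (addOrderOf_dvd_of_nsmul_eq_zero hl0)
  · have := addOrderOf_pos (f y); omega
  · rintro rfl; have := addOrderOf_pos (f y); omega

theorem ZMod.castHom_eq_zero_of_two_nsmul_eq_zero {m d : ℕ} (hm : Even m) {z : ZMod (m * d)}
    (hz : 2 • z = 0) : ZMod.castHom (dvd_mul_left d m) (ZMod d) z = 0 := by
  obtain ⟨h, rfl⟩ := hm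
  obtain ⟨t, rfl⟩ := ZMod.intCast_surjective z
  rw [map_intCast, ZMod.intCast_zmod_eq_zero_iff_dvd]
  rw [nsmul_eq_mul, ← Int.cast_natCast, ← Int.cast_mul, ZMod.intCast_zmod_eq_zero_iff_dvd] at hz
  obtain ⟨c, hc⟩ := hz
  exact ⟨h * c, by push_cast at hc; linarith⟩

theorem ZMod.prime_dvd_addOrderOf {p s : ℕ} (hp : p.Prime) {x : ZMod (p ^ s)} (hx : x ≠ 0) :
    p ∣ addOrderOf x := by
  have : NeZero p := ⟨hp.ne_zero⟩
  obtain ⟨t, -, ht⟩ := (Nat.dvd_prime_pow hp).mp (ZMod.card (p ^ s) ▸ addOrderOf_dvd_card (x := x))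
  rcases t with _ | t
  · exact absurd (AddMonoid.addOrderOf_eq_one_iff.mp ht) hx
  · exact ht ▸ dvd_pow_self p t.succ_ne_zero

namespace SeqProtocol

attribute [local instance] SeqProtocol.msgFintype

variable {n m d : ℕ} (P : SeqProtocol n m d)

def inputSum (X : ℕ → Fin d) (k : ℕ) : ZMod d := ∑ j ∈ range k, ((X j : ℕ) : ZMod d)

def stageDiscrepancy (k : ℕ) (x : Fin d) (μ : P.Msg k) : ZMod (m * d) :=
  (x : ℕ) - d * (P.out k x μ : ℕ)

def discrepancy (X : ℕ → Fin d) (k : ℕ) : ZMod (m * d) :=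
  ∑ j ∈ range k, P.stageDiscrepancy j (X j) (P.run X j)

theorem run_congr {X X' : ℕ → Fin d} {k : ℕ} (h : ∀ j < k, X j = X' j) :
    P.run X k = P.run X' k := by
  induction k with
  | zero => rfl
  | succ k ih =>
    simp only [run, h k k.lt_succ_self, ih fun j hj => h j (hj.trans k.lt_succ_self)]

theorem run_eq_of_run_eq {X X' : ℕ → Fin d} {k : ℕ} (hk : P.run X k = P.run X' k)
    (h : ∀ j ≥ k, X j = X' j) {j : ℕ} (hj : k ≤ j) : P.run X j = P.run X' j := by
  induction j, hj using Nat.le_induction with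
  | base => exact hk
  | succ j hj ih => simp only [run, ih, h j hj]

theorem inputSum_congr {X X' : ℕ → Fin d} {k : ℕ} (h : ∀ j < k, X j = X' j) :
    inputSum X k = inputSum X' k :=
  sum_congr rfl fun j hj => by rw [h j (mem_range.mp hj)]

theorem discrepancy_congr {X X' : ℕ → Fin d} {k : ℕ} (h : ∀ j < k, X j = X' j) :
    P.discrepancy X k = P.discrepancy X' k :=
  sum_congr rfl fun j hj => by
    have hj := mem_range.mp hj
    rw [h j hj, P.run_congr fun i hi => h i (hi.trans hj)]

theorem run_update_succ (X : ℕ → Fin d) (k : ℕ) (x : Fin d) :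
    P.run (Function.update X k x) (k + 1) = P.send k x (P.run X k) := by
  rw [run, Function.update_self,
    P.run_congr (X' := X) fun j hj => Function.update_of_ne hj.ne _ _]

theorem inputSum_update_succ (X : ℕ → Fin d) (k : ℕ) (x : Fin d) :
    inputSum (Function.update X k x) (k + 1) = inputSum X k + (x : ℕ) := by
  rw [inputSum, sum_range_succ, Function.update_self, ← inputSum,
    inputSum_congr (X' := X) fun j hj => Function.update_of_ne hj.ne _ _]

theorem discrepancy_update_succ (X : ℕ → Fin d) (k : ℕ) (x : Fin d) :
    P.discrepancy (Function.update X k x) (k + 1) =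
      P.discrepancy X k + P.stageDiscrepancy k x (P.run X k) := by
  rw [discrepancy, sum_range_succ, Function.update_self,
    P.run_congr (X' := X) fun j hj => Function.update_of_ne hj.ne _ _,
    ← discrepancy, P.discrepancy_congr (X' := X) fun j hj => Function.update_of_ne hj.ne _ _]

theorem Solves.discrepancy_eq_zero {P : SeqProtocol n m d} (hP : P.Solves) {X : ℕ → Fin d}
    (hX : inputSum X n = 0) : P.discrepancy X n = 0 := by
  have h := hP X ((ZMod.intCast_zmod_eq_zero_iff_dvd _ _).mp (by push_cast; exact hX))
  have h' := (ZMod.intCast_eq_intCast_iff (d * _) (∑ k ∈ range n, ((X k : ℕ) : ℤ)) (m * d)).mpr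
    (by rwa [Nat.cast_mul])
  push_cast at h'
  simp only [discrepancy, stageDiscrepancy]
  rw [sum_sub_distrib, ← mul_sum, h', sub_self]

variable [NeZero d]

theorem Solves.discrepancy_eq_of_run_eq {P : SeqProtocol n m d} (hP : P.Solves)
    {k : ℕ} (hk : k < n) {X X' : ℕ → Fin d} (hrun : P.run X k = P.run X' k)
    (hsum : inputSum X k = inputSum X' k) : P.discrepancy X k = P.discrepancy X' k := by
  -- complete both prefixes by the same input at stage `k` making the total sum `0 (mod d)`,
  -- followed by zeros
  let tail : ℕ → Fin d := fun j => if j = k then ⟨(-inputSum X k).val, ZMod.val_lt _⟩ else 0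
  let Z : ℕ → Fin d := fun j => if j < k then X j else tail j
  let Z' : ℕ → Fin d := fun j => if j < k then X' j else tail j
  have hZ : ∀ j < k, Z j = X j := fun j hj => if_pos hj
  have hZ' : ∀ j < k, Z' j = X' j := fun j hj => if_pos hj
  have htail : ∀ j ≥ k, Z j = Z' j := fun j hj => by simp only [Z, Z', if_neg hj.not_gt]
  have hinput : ∀ Y : ℕ → Fin d, inputSum Y k = inputSum X k → (∀ j ≥ k, Y j = tail j) →
      inputSum Y n = 0 := by
    intro Y hY hYt
    obtain ⟨t, rfl⟩ := Nat.exists_eq_add_of_lt hk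
    rw [add_right_comm, inputSum, sum_range_add, sum_range_succ, ← inputSum, hY,
      hYt k le_rfl, sum_eq_zero fun j _ => by
        simp only [hYt _ (by omega : k + 1 + j ≥ k), tail, if_neg (by omega : k + 1 + j ≠ k),
          Fin.val_zero, Nat.cast_zero]]
    simp [tail]
  have hZ0 := hP.discrepancy_eq_zero (hinput Z (inputSum_congr hZ) fun j hj => if_neg hj.not_gt)
  have hZ'0 := hP.discrepancy_eq_zero (hinput Z' (by rw [inputSum_congr hZ', hsum])
    fun j hj => if_neg hj.not_gt)
  have hrest : ∑ j ∈ Ico k n, P.stageDiscrepancy j (Z j) (P.run Z j) =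
      ∑ j ∈ Ico k n, P.stageDiscrepancy j (Z' j) (P.run Z' j) := by
    refine sum_congr rfl fun j hj => ?_
    have hj := (mem_Ico.mp hj).1
    rw [htail j hj, P.run_eq_of_run_eq (by rw [P.run_congr hZ, P.run_congr hZ', hrun]) htail hj]
  rw [discrepancy, ← sum_range_add_sum_Ico _ hk.le, ← discrepancy, P.discrepancy_congr hZ] at hZ0
  rw [discrepancy, ← sum_range_add_sum_Ico _ hk.le, ← discrepancy, P.discrepancy_congr hZ',
    ← hrest] at hZ'0
  linear_combination hZ0 - hZ'0

open Classical in
noncomputable def reach (k : ℕ) (μ : P.Msg k) : Finset (ZMod d) :=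
  {r | ∃ X, P.run X k = μ ∧ inputSum X k = r}

theorem mem_reach {k : ℕ} {μ : P.Msg k} {r : ZMod d} :
    r ∈ P.reach k μ ↔ ∃ X, P.run X k = μ ∧ inputSum X k = r := by
  simp [reach]

theorem image_add_subset_reach_send (k : ℕ) (μ : P.Msg k) (x : Fin d) :
    (P.reach k μ).image (· + ((x : ℕ) : ZMod d)) ⊆ P.reach (k + 1) (P.send k x μ) := by
  intro r hr
  obtain ⟨r, hr', rfl⟩ := mem_image.mp hr
  obtain ⟨X, hXrun, hXsum⟩ := P.mem_reach.mp hr'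
  exact P.mem_reach.mpr ⟨Function.update X k x, by rw [run_update_succ, hXrun],
    by rw [inputSum_update_succ, hXsum]⟩

theorem exists_add_invariant_reach (hcard : ∀ k < d, Fintype.card (P.Msg (k + 1)) < d) :
    ∃ k < d, ∃ (μ : P.Msg k) (x x' : Fin d), x ≠ x' ∧ P.send k x μ = P.send k x' μ ∧
      (P.reach k μ).Nonempty ∧
      ∀ r ∈ P.reach k μ, r + (((x : ℕ) : ZMod d) - ((x' : ℕ) : ZMod d)) ∈ P.reach k μ := by
  by_contra hnone
  have hgrow : ∀ t ≤ d, ∃ μ : P.Msg t, t < #(P.reach t μ) := by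
    intro t ht
    induction t with
    | zero =>
      exact ⟨P.msgInit, card_pos.mpr ⟨0, P.mem_reach.mpr ⟨fun _ => 0, rfl, rfl⟩⟩⟩
    | succ t ih =>
      obtain ⟨μ, hμ⟩ := ih (by omega)
      obtain ⟨x, x', hxx', hsend⟩ := Fintype.exists_ne_map_eq_of_card_lt (P.send t · μ)
        (by rw [Fintype.card_fin]; exact hcard t (by omega))
      refine ⟨P.send t x μ, ?_⟩
      rcases (P.reach t μ).card_lt_card_image_add_union_or_add_sub_mem
        ((x : ℕ) : ZMod d) ((x' : ℕ) : ZMod d) with hlt | hinv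
      · have := card_le_card (union_subset (P.image_add_subset_reach_send t μ x)
          (hsend ▸ P.image_add_subset_reach_send t μ x'))
        omega
      · exact (hnone ⟨t, by omega, μ, x, x', hxx', hsend, card_pos.mp (by omega), hinv⟩).elim
  obtain ⟨μ, hμ⟩ := hgrow d le_rfl
  exact (card_le_univ _).trans_eq (ZMod.card d) |>.not_gt hμ

theorem Solves.discrepancy_eq_add_of_send_eq {P : SeqProtocol n m d} (hP : P.Solves) {k : ℕ}
    (hk : k + 1 < n) {μ : P.Msg k} {x x' : Fin d} (hsend : P.send k x μ = P.send k x' μ)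
    {X Y : ℕ → Fin d} (hX : P.run X k = μ) (hY : P.run Y k = μ)
    (hsum : inputSum Y k = inputSum X k + (((x : ℕ) : ZMod d) - ((x' : ℕ) : ZMod d))) :
    P.discrepancy Y k =
      P.discrepancy X k + (P.stageDiscrepancy k x μ - P.stageDiscrepancy k x' μ) := by
  have h := hP.discrepancy_eq_of_run_eq hk (X := Function.update X k x)
    (X' := Function.update Y k x') (by rw [run_update_succ, run_update_succ, hX, hY, hsend])
    (by rw [inputSum_update_succ, inputSum_update_succ, hsum]; ring)
  rw [discrepancy_update_succ, discrepancy_update_succ, hX, hY] at h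
  linear_combination -h

theorem Solves.exists_discrepancy_eq_add_nsmul {P : SeqProtocol n m d} (hP : P.Solves) {k : ℕ}
    (hk : k + 1 < n) {μ : P.Msg k} {x x' : Fin d} (hsend : P.send k x μ = P.send k x' μ)
    (hinv : ∀ r ∈ P.reach k μ, r + (((x : ℕ) : ZMod d) - ((x' : ℕ) : ZMod d)) ∈ P.reach k μ)
    {X : ℕ → Fin d} (hX : P.run X k = μ) (i : ℕ) :
    ∃ Y, P.run Y k = μ ∧
      inputSum Y k = inputSum X k + i • (((x : ℕ) : ZMod d) - ((x' : ℕ) : ZMod d)) ∧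
      P.discrepancy Y k =
        P.discrepancy X k + i • (P.stageDiscrepancy k x μ - P.stageDiscrepancy k x' μ) := by
  induction i with
  | zero => exact ⟨X, hX, by simp, by simp⟩
  | succ i ih =>
    obtain ⟨Y, hYrun, hYsum, hYdisc⟩ := ih
    obtain ⟨Z, hZrun, hZsum⟩ := P.mem_reach.mp (hinv _ (P.mem_reach.mpr ⟨Y, hYrun, rfl⟩))
    refine ⟨Z, hZrun, by rw [hZsum, hYsum, succ_nsmul, add_assoc], ?_⟩
    rw [hP.discrepancy_eq_add_of_send_eq hk hsend hYrun hZrun hZsum, hYdisc, succ_nsmul,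
      add_assoc]

theorem not_solves_of_add_invariant_reach (hm : Even m) (hd : ∃ s, d = 2 ^ s) {k : ℕ}
    (hk : k + 1 < n) {μ : P.Msg k} {x x' : Fin d} (hxx' : x ≠ x')
    (hsend : P.send k x μ = P.send k x' μ) (hne : (P.reach k μ).Nonempty)
    (hinv : ∀ r ∈ P.reach k μ, r + (((x : ℕ) : ZMod d) - ((x' : ℕ) : ZMod d)) ∈ P.reach k μ) :
    ¬ P.Solves := by
  intro hP
  set ε : ZMod d := ((x : ℕ) : ZMod d) - ((x' : ℕ) : ZMod d)
  set Δ := P.stageDiscrepancy k x μ - P.stageDiscrepancy k x' μ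
  obtain ⟨X, hXrun, -⟩ := P.mem_reach.mp hne.choose_spec
  obtain ⟨Y, hYrun, hYsum, hYdisc⟩ :=
    hP.exists_discrepancy_eq_add_nsmul hk hsend hinv hXrun (addOrderOf ε)
  rw [addOrderOf_nsmul_eq_zero, add_zero] at hYsum
  rw [hP.discrepancy_eq_of_run_eq (by omega) (hYrun.trans hXrun.symm) hYsum, left_eq_add] at hYdisc
  have hcast : ZMod.castHom (dvd_mul_left d m) (ZMod d) Δ = ε := by
    simp [Δ, ε, stageDiscrepancy]
  have hε : ε ≠ 0 := sub_ne_zero.mpr fun h => hxx' (Fin.ext (by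
    simpa [Nat.mod_eq_of_lt x.isLt, Nat.mod_eq_of_lt x'.isLt] using
      (ZMod.natCast_eq_natCast_iff' _ _ _).mp h))
  obtain ⟨s, rfl⟩ := hd
  have h := (ZMod.castHom (dvd_mul_left _ m) (ZMod (2 ^ s))).toAddMonoidHom
    |>.nsmul_addOrderOf_map_ne_zero (fun z hz => ZMod.castHom_eq_zero_of_two_nsmul_eq_zero hm hz)
    (y := Δ)
  simp only [RingHom.toAddMonoidHom_eq_coe, AddMonoidHom.coe_coe, hcast] at h
  exact h (ZMod.prime_dvd_addOrderOf Nat.prime_two hε) hYdisc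

end SeqProtocol

/-- **Non-classicality of temporal GHZ correlations.**  Let `m ≥ 2` be even and let `d` be
a power of two with `m² < d ≤ 2m²`.  Then for every `n ≥ 2m³` there is no deterministic
sequential protocol, all of whose message alphabets `M_1, …, M_{n-1}` have size at most `m`
(i.e. each message carries at most `log₂ m` bits, the Holevo bound of an `m`-level system),
that solves the sequential `n`-point modulo-`(m,d)` problem with certainty. -/
theorem no_holevo_bounded_classical_simulation
    {m d n : ℕ} (hm2 : 2 ≤ m) (hmeven : Even m)
    (hdpow : ∃ s : ℕ, d = 2 ^ s) (hdl : m ^ 2 < d) (hdu : d ≤ 2 * m ^ 2)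
    (hn : 2 * m ^ 3 ≤ n) :
    ¬ ∃ P : SeqProtocol n m d,
        (∀ k ∈ Finset.Icc 1 (n - 1), (@Fintype.card (P.Msg k) (P.msgFintype k)) ≤ m) ∧
        P.Solves := by
  rintro ⟨P, hcard, hP⟩
  have : NeZero d := ⟨(Nat.zero_lt_of_lt hdl).ne'⟩
  have hmd : m < d := (Nat.le_self_pow two_ne_zero m).trans_lt hdl
  have hdn : d < n := by nlinarith
  obtain ⟨k, hk, μ, x, x', hxx', hsend, hne, hinv⟩ := P.exists_add_invariant_reach
    fun k hk => (hcard (k + 1) (Finset.mem_Icc.mpr ⟨by omega, by omega⟩)).trans_lt hmd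
  exact P.not_solves_of_add_invariant_reach hmeven hdpow (by omega) hxx' hsend hne hinv hP
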